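/- Let 𝒞 and 𝒟 be preadditive categories and let F : 𝒞 ⥤ 𝒟 be a functor with a left adjoint L : 𝒟 ⥤ 𝒞 and a right adjoint R : 𝒟 ⥤ 𝒞 (L, F, R additive). Then the following statements are equivalent: (i) R is a left quasi-adjoint of F, i.e. there exist n ∈ ℕ and natural transformations ηᵢ : 𝟭_𝒟 ⟶ R ⋙ F and ζᵢ : F ⋙ R ⟶ 𝟭_𝒞 (1 ≤ i ≤ n) such that ∑ᵢ ζᵢ_{R(D)} ∘ R(ηᵢ_D) = 𝟙_{R(D)} for every object D of 𝒟; (ii) R is a direct summand of L in the category of additive functors 𝒟 ⥤ 𝒞, i.e. there exist n ∈ ℕ and natural transformations φᵢ : R ⟶ L and ψᵢ : L ⟶ R (1 ≤ i ≤ n) such that ∑ᵢ ψᵢ ∘ φᵢ = 𝟙_R (the identity natural transformation of R); (iii) F is a left quasi-adjoint of L, i.e. there exist n ∈ ℕ and natural transformations ηᵢ : 𝟭_𝒞 ⟶ F ⋙ L and ζᵢ : L ⋙ F ⟶ 𝟭_𝒟 (1 ≤ i ≤ n) such that ∑ᵢ ζᵢ_{F(C)} ∘ F(ηᵢ_C)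 = 𝟙_{F(C)} for every object C of 𝒞. -/

import Mathlib

/-!
Transposing along `L ⊣ F` turns transformations `F ⋙ R ⟶ 𝟭` and `𝟭 ⟶ R ⋙ F` into
transformations `R ⟶ L` and `L ⟶ R`, and the composite `R ⟶ L ⟶ R` of a transposed pair is
`R η ≫ ζ R`; so the families of (i) and of (ii) correspond term by term. Transposing along
`F ⊣ R` turns `𝟭 ⟶ F ⋙ L` and `L ⋙ F ⟶ 𝟭` into `R ⟶ L` and `L ⟶ R`, and now the composite
`R ⟶ L ⟶ R` is the conjugate of `F η ≫ ζ F : F ⟶ F`. Conjugation `End F ≃ End R` is additive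
and preserves identities, which gives (ii) ⟺ (iii).
-/

open CategoryTheory

namespace CategoryTheory

open CategoryTheory.Functor

variable {𝒞 𝒟 : Type*} [Category 𝒞] [Category 𝒟]

def Functor.IsLeftQuasiAdjoint [Preadditive 𝒞] (G : 𝒟 ⥤ 𝒞) (F : 𝒞 ⥤ 𝒟) : Prop :=
  ∃ (n : ℕ) (η : Fin n → (𝟭 𝒟 ⟶ G ⋙ F)) (ζ : Fin n → (F ⋙ G ⟶ 𝟭 𝒞)),
    ∀ D : 𝒟, ∑ i, G.map ((η i).app D) ≫ (ζ i).app (G.obj D) = 𝟙 (G.obj D)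

lemma Functor.isLeftQuasiAdjoint_iff [Preadditive 𝒞] (G : 𝒟 ⥤ 𝒞) (F : 𝒞 ⥤ 𝒟) :
    G.IsLeftQuasiAdjoint F ↔
      ∃ (n : ℕ) (η : Fin n → (𝟭 𝒟 ⟶ G ⋙ F)) (ζ : Fin n → (F ⋙ G ⟶ 𝟭 𝒞)),
        ∑ i, (whiskerRight (η i) G ≫ whiskerLeft G (ζ i) : G ⟶ G) = 𝟙 G := by
  simp only [IsLeftQuasiAdjoint, NatTrans.ext'_iff, funext_iff, NatTrans.app_sum,
    NatTrans.comp_app, whiskerRight_app, whiskerLeft_app, NatTrans.id_app]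

/-- `φ` and `ψ` are the components of a split mono `X ⟶ Yⁿ` and of its retraction, written out
since the biproduct `Yⁿ` need not exist. -/
def IsDirectSummandOfCopies {C : Type*} [Category C] [Preadditive C] (X Y : C) : Prop :=
  ∃ (n : ℕ) (φ : Fin n → (X ⟶ Y)) (ψ : Fin n → (Y ⟶ X)), ∑ i, φ i ≫ ψ i = 𝟙 X

lemma isDirectSummandOfCopies_iff_of_equiv {C : Type*} [Category C] [Preadditive C] {X Y : C}
    {A B : Type*} (e : A ≃ (X ⟶ Y)) (e' : B ≃ (Y ⟶ X)) :
    IsDirectSummandOfCopies X Y ↔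
      ∃ (n : ℕ) (a : Fin n → A) (b : Fin n → B), ∑ i, e (a i) ≫ e' (b i) = 𝟙 X :=
  exists_congr fun _ =>
    e.surjective.comp_left.exists.trans <| exists_congr fun _ => e'.surjective.comp_left.exists

lemma conjugateEquiv_sum [Preadditive 𝒞] [Preadditive 𝒟] {L₁ L₂ : 𝒞 ⥤ 𝒟} {R₁ R₂ : 𝒟 ⥤ 𝒞}
    (adj₁ : L₁ ⊣ R₁) (adj₂ : L₂ ⊣ R₂) [R₂.Additive] {ι : Type*} (s : Finset ι)
    (α : ι → (L₂ ⟶ L₁)) :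
    conjugateEquiv adj₁ adj₂ (∑ i ∈ s, α i) = ∑ i ∈ s, conjugateEquiv adj₁ adj₂ (α i) := by
  ext X
  simp [NatTrans.app_sum, Functor.map_sum, Preadditive.comp_sum, Preadditive.sum_comp]

namespace Adjunction

variable {L : 𝒟 ⥤ 𝒞} {F : 𝒞 ⥤ 𝒟}

lemma whiskerLeft_homEquiv_comp_whiskerRight_homEquiv_symm (adj : L ⊣ F) (R : 𝒟 ⥤ 𝒞)
    (η : 𝟭 𝒟 ⟶ R ⋙ F) (ζ : F ⋙ R ⟶ 𝟭 𝒞) :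
    (adj.whiskerLeft 𝒞).homEquiv R (𝟭 𝒞) ζ ≫ ((adj.whiskerRight 𝒟).homEquiv (𝟭 𝒟) R).symm η =
      (whiskerRight η R ≫ whiskerLeft R ζ : R ⟶ R) := by
  rw [homEquiv_unit, homEquiv_counit]
  ext D
  have hζ := ζ.naturality (L.map (η.app D) ≫ adj.counit.app (R.obj D))
  have hunit := adj.unit.naturality (η.app D)
  simp only [Functor.comp_map, Functor.id_map, comp_obj, id_obj] at hζ hunit
  simp only [NatTrans.comp_app, whiskeringLeft_obj_map, whiskerLeft_app, whiskerLeft_unit_app_app,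
    whiskeringRight_obj_map, whiskerRight_counit_app_app, whiskerRight_app, Category.assoc]
  rw [← hζ, ← R.map_comp_assoc, F.map_comp, ← reassoc_of% hunit, right_triangle_components,
    Category.comp_id]

lemma whiskerLeft_homEquiv_symm_comp_whiskerRight_homEquiv {R : 𝒟 ⥤ 𝒞} (adj : F ⊣ R)
    (L : 𝒟 ⥤ 𝒞) (η : 𝟭 𝒞 ⟶ F ⋙ L) (ζ : L ⋙ F ⟶ 𝟭 𝒟) :
    (((adj.whiskerLeft 𝒞).homEquiv (𝟭 𝒞) L).symm η ≫ (adj.whiskerRight 𝒟).homEquiv L (𝟭 𝒟) ζ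
      : R ⟶ R) = conjugateEquiv adj adj (whiskerRight η F ≫ whiskerLeft F ζ) := by
  rw [homEquiv_unit, homEquiv_counit]
  ext D
  have hζ := ζ.naturality (adj.counit.app D)
  simp only [Functor.comp_map, Functor.id_map, comp_obj, id_obj] at hζ
  simp only [NatTrans.comp_app, whiskeringLeft_obj_map, whiskerLeft_app, whiskerLeft_counit_app_app,
    whiskeringRight_obj_map, whiskerRight_unit_app_app, whiskerRight_app, conjugateEquiv_apply_app,
    Category.assoc]
  rw [R.map_comp, Category.assoc, ← R.map_comp (ζ.app _), ← hζ, R.map_comp,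
    adj.unit_naturality_assoc, adj.unit_naturality_assoc]

lemma isLeftQuasiAdjoint_iff_isDirectSummandOfCopies [Preadditive 𝒞] (adj : L ⊣ F)
    (R : 𝒟 ⥤ 𝒞) : R.IsLeftQuasiAdjoint F ↔ IsDirectSummandOfCopies R L := by
  rw [isLeftQuasiAdjoint_iff, isDirectSummandOfCopies_iff_of_equiv (X := R) (Y := L)
    ((adj.whiskerLeft 𝒞).homEquiv R (𝟭 𝒞)) ((adj.whiskerRight 𝒟).homEquiv (𝟭 𝒟) R).symm]
  refine exists_congr fun n => exists_comm.trans (exists₂_congr fun ζ η => ?_)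
  exact Eq.to_iff <| congrArg (· = 𝟙 R) <| Finset.sum_congr rfl fun i _ =>
    (whiskerLeft_homEquiv_comp_whiskerRight_homEquiv_symm adj R (η i) (ζ i)).symm

lemma isLeftQuasiAdjoint_iff_rightAdjoint_isDirectSummandOfCopies [Preadditive 𝒞]
    [Preadditive 𝒟] {R : 𝒟 ⥤ 𝒞} [R.Additive] (adj : F ⊣ R) (L : 𝒟 ⥤ 𝒞) :
    F.IsLeftQuasiAdjoint L ↔ IsDirectSummandOfCopies R L := by
  rw [isLeftQuasiAdjoint_iff, isDirectSummandOfCopies_iff_of_equiv (X := R) (Y := L)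
    ((adj.whiskerLeft 𝒞).homEquiv (𝟭 𝒞) L).symm ((adj.whiskerRight 𝒟).homEquiv L (𝟭 𝒟))]
  refine exists_congr fun n => exists₂_congr fun η ζ => ?_
  rw [← (conjugateEquiv adj adj).apply_eq_iff_eq, conjugateEquiv_id, conjugateEquiv_sum]
  simp only [← whiskerLeft_homEquiv_symm_comp_whiskerRight_homEquiv]

end Adjunction

end CategoryTheory

theorem left_quasi_adjoint_tfae_general
    {𝒞 : Type*} [Category 𝒞] [Preadditive 𝒞] {𝒟 : Type*} [Category 𝒟] [Preadditive 𝒟]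
    (F : 𝒞 ⥤ 𝒟) (L R : 𝒟 ⥤ 𝒞) [R.Additive]
    (adjLF : L ⊣ F) (adjFR : F ⊣ R) :
    List.TFAE
      [ -- (i) R is a left quasi-adjoint of F
        (∃ (n : ℕ) (η : Fin n → (𝟭 𝒟 ⟶ R ⋙ F)) (ζ : Fin n → (F ⋙ R ⟶ 𝟭 𝒞)),
          ∀ D : 𝒟, ∑ i, R.map ((η i).app D) ≫ (ζ i).app (R.obj D) = 𝟙 (R.obj D)),
        -- (ii) R is a direct summand of L
        (∃ (n : ℕ) (φ : Fin n → (R ⟶ L)) (ψ : Fin n → (L ⟶ R)),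
          ∑ i, φ i ≫ ψ i = 𝟙 R),
        -- (iii) F is a left quasi-adjoint of L
        (∃ (n : ℕ) (η : Fin n → (𝟭 𝒞 ⟶ F ⋙ L)) (ζ : Fin n → (L ⋙ F ⟶ 𝟭 𝒟)),
          ∀ C : 𝒞, ∑ i, F.map ((η i).app C) ≫ (ζ i).app (F.obj C) = 𝟙 (F.obj C)) ] := by
  tfae_have 1 ↔ 2 := adjLF.isLeftQuasiAdjoint_iff_isDirectSummandOfCopies R
  tfae_have 3 ↔ 2 := adjFR.isLeftQuasiAdjoint_iff_rightAdjoint_isDirectSummandOfCopies L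
  tfae_finish

/-- For an additive functor `F : 𝒞 ⥤ 𝒟` between preadditive categories, with additive
left adjoint `L` and additive right adjoint `R`, the following are equivalent:
(i) `R` is a left quasi-adjoint of `F`;
(ii) `R` is a direct summand of `L` in the category of (additive) functors `𝒟 ⥤ 𝒞`;
(iii) `F` is a left quasi-adjoint of `L`. -/
theorem left_quasi_adjoint_tfae
    {𝒞 : Type*} [Category 𝒞] [Preadditive 𝒞] {𝒟 : Type*} [Category 𝒟] [Preadditive 𝒟]
    (F : 𝒞 ⥤ 𝒟) (L R : 𝒟 ⥤ 𝒞) [F.Additive] [L.Additive] [R.Additive]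
    (adjLF : L ⊣ F) (adjFR : F ⊣ R) :
    List.TFAE
      [ -- (i) R is a left quasi-adjoint of F
        (∃ (n : ℕ) (η : Fin n → (𝟭 𝒟 ⟶ R ⋙ F)) (ζ : Fin n → (F ⋙ R ⟶ 𝟭 𝒞)),
          ∀ D : 𝒟, ∑ i, R.map ((η i).app D) ≫ (ζ i).app (R.obj D) = 𝟙 (R.obj D)),
        -- (ii) R is a direct summand of L
        (∃ (n : ℕ) (φ : Fin n → (R ⟶ L)) (ψ : Fin n → (L ⟶ R)),
          ∑ i, φ i ≫ ψ i = 𝟙 R),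
        -- (iii) F is a left quasi-adjoint of L
        (∃ (n : ℕ) (η : Fin n → (𝟭 𝒞 ⟶ F ⋙ L)) (ζ : Fin n → (L ⋙ F ⟶ 𝟭 𝒟)),
          ∀ C : 𝒞, ∑ i, F.map ((η i).app C) ≫ (ζ i).app (F.obj C) = 𝟙 (F.obj C)) ] :=
  left_quasi_adjoint_tfae_general F L R adjLF adjFR
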